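/- Let H_n denote the physicists' Hermite polynomials, H_n(x) = n! \sum_{k=0}^{\lfloor n/2 \rfloor} (-1)^k (2x)^{n-2k} / (k! (n-2k)!). Then the Feldheim linearization formula holds: for all i, j \in \mathbb{N} and all x, H_i(x) H_j(x) = \sum_{k=0}^{\min(i,j)} \binom{i}{k} \binom{j}{k} 2^k k! \, H_{i+j-2k}(x). -/

import Mathlib

open Finset

/-- The physicists' Hermite polynomial
`H_n(x) = n! ∑_{k=0}^{⌊n/2⌋} (-1)^k (2x)^{n-2k} / (k! (n-2k)!)`. -/
noncomputable def hermiteH (n : ℕ) (x : ℝ) : ℝ :=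
  (Nat.factorial n : ℝ) *
    ∑ k ∈ Finset.range (n / 2 + 1),
      (-1 : ℝ) ^ k * (2 * x) ^ (n - 2 * k) /
        ((Nat.factorial k : ℝ) * (Nat.factorial (n - 2 * k) : ℝ))

/-!
Writing the coefficient of `(2x)^(n-2k)` as `(-1)^k n(n-1)⋯(n-2k+1) / k!`, a falling factorial
that vanishes exactly when `2k > n`, turns the explicit formula into the three-term recurrence
`H_{n+2} = 2x H_{n+1} - 2(n+1) H_n`. Writing `S_i` for the right-hand side of the Feldheim formula
(with `j` fixed), the same recurrence `S_{i+2} = 2x S_{i+1} - 2(i+1) S_i` holds: expand each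
`2x H_m` as `H_{m+1} + 2m H_{m-1}` and compare coefficients, which reduces to a Pascal-type identity
for `C(i,k) C(j,k) 2^k k!`. As `S_0 = H_j` and `S_1 = 2x H_j`, induction on `i` gives
`H_i H_j = S_i`.
-/

open scoped Nat

noncomputable def hermiteCoeff (n k : ℕ) : ℝ := (-1) ^ k * n.descFactorial (2 * k) / k !

lemma hermiteH_eq_sum_range (n : ℕ) {N : ℕ} (hN : n / 2 < N) (x : ℝ) :
    hermiteH n x = ∑ k ∈ range N, hermiteCoeff n k * (2 * x) ^ (n - 2 * k) := by
  rw [hermiteH, mul_sum]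
  refine (sum_congr rfl fun k hk => ?_).trans
    (sum_subset (range_subset_range.2 (by omega)) fun k _ hk => ?_)
  · have hk : 2 * k ≤ n := by simp at hk; omega
    rw [hermiteCoeff, ← Nat.factorial_mul_descFactorial hk]
    push_cast
    field_simp
  · have : n.descFactorial (2 * k) = 0 :=
      Nat.descFactorial_eq_zero_iff_lt.2 (by simp at hk; omega)
    simp [hermiteCoeff, this]

lemma descFactorial_add_two_two_mul_add_one (n k : ℕ) :
    (n + 2).descFactorial (2 * (k + 1)) =
      (n + 1).descFactorial (2 * (k + 1)) + 2 * (k + 1) * (n + 1) * n.descFactorial (2 * k) := by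
  rw [Nat.mul_add_one, Nat.succ_descFactorial_succ, Nat.succ_descFactorial_succ,
    Nat.succ_descFactorial_succ, Nat.descFactorial_succ]
  rcases le_or_gt (2 * k) n with h | h
  · obtain ⟨m, rfl⟩ := Nat.exists_eq_add_of_le h
    rw [Nat.add_sub_cancel_left]
    ring
  · simp [Nat.descFactorial_eq_zero_iff_lt.2 h]

lemma hermiteCoeff_add_two_succ (n k : ℕ) :
    hermiteCoeff (n + 2) (k + 1) =
      hermiteCoeff (n + 1) (k + 1) - 2 * (n + 1) * hermiteCoeff n k := by
  simp only [hermiteCoeff, descFactorial_add_two_two_mul_add_one, Nat.factorial_succ]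
  push_cast
  field_simp
  ring

lemma hermiteCoeff_zero_right (n : ℕ) : hermiteCoeff n 0 = 1 := by simp [hermiteCoeff]

lemma hermiteH_add_two (n : ℕ) (x : ℝ) :
    hermiteH (n + 2) x = 2 * x * hermiteH (n + 1) x - 2 * (n + 1) * hermiteH n x := by
  rw [hermiteH_eq_sum_range (n + 2) (N := n + 2) (by omega),
    hermiteH_eq_sum_range (n + 1) (N := n + 2) (by omega),
    hermiteH_eq_sum_range n (N := n + 1) (by omega),
    sum_range_succ' _ (n + 1), sum_range_succ' _ (n + 1), mul_add, mul_sum, mul_sum,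
    add_sub_right_comm, ← sum_sub_distrib]
  congr 1
  · refine sum_congr rfl fun k hk => ?_
    have hpow : hermiteCoeff (n + 1) (k + 1) * (2 * x * (2 * x) ^ (n + 1 - 2 * (k + 1))) =
        hermiteCoeff (n + 1) (k + 1) * (2 * x) ^ (n - 2 * k) := by
      rcases le_or_gt (2 * k + 1) n with h | h
      · rw [show n - 2 * k = n + 1 - 2 * (k + 1) + 1 by omega, pow_succ']
      · have : (n + 1).descFactorial (2 * (k + 1)) = 0 :=
          Nat.descFactorial_eq_zero_iff_lt.2 (by omega)
        simp [hermiteCoeff, this]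
    rw [hermiteCoeff_add_two_succ, show n + 2 - 2 * (k + 1) = n - 2 * k by omega]
    linear_combination -hpow
  · simp [hermiteCoeff_zero_right]
    ring

lemma hermiteH_zero (x : ℝ) : hermiteH 0 x = 1 := by simp [hermiteH]

lemma hermiteH_one (x : ℝ) : hermiteH 1 x = 2 * x := by simp [hermiteH]

lemma two_mul_mul_hermiteH (n : ℕ) (x : ℝ) :
    2 * x * hermiteH n x = hermiteH (n + 1) x + 2 * n * hermiteH (n - 1) x := by
  cases n with
  | zero => simp [hermiteH_zero, hermiteH_one]
  | succ n =>
    rw [hermiteH_add_two, Nat.add_sub_cancel]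
    push_cast
    ring

lemma Nat.cast_choose_succ_mul {R : Type*} [CommRing R] (n k : ℕ) :
    (n.choose (k + 1) : R) * (k + 1) = n.choose k * (n - k) := by
  rcases le_or_gt k n with h | h
  · have := congrArg (Nat.cast : ℕ → R) (Nat.choose_succ_right_eq n k)
    push_cast [h] at this
    exact this
  · simp [Nat.choose_eq_zero_of_lt h, Nat.choose_eq_zero_of_lt (h.trans k.lt_succ_self)]

lemma Nat.cast_succ_mul_choose {R : Type*} [CommRing R] (n k : ℕ) :
    ((n : R) + 1) * n.choose k = (n + 1).choose k * (n + 1 - k) := by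
  rcases le_or_gt k (n + 1) with h | h
  · have := congrArg (Nat.cast : ℕ → R) (Nat.choose_mul_succ_eq n k)
    push_cast [h] at this
    linear_combination this
  · simp [Nat.choose_eq_zero_of_lt h, Nat.choose_eq_zero_of_lt (n.lt_succ_self.trans h)]

noncomputable def feldheimCoeff (i j k : ℕ) : ℝ :=
  (i.choose k : ℝ) * (j.choose k : ℝ) * 2 ^ k * (Nat.factorial k : ℝ)

lemma feldheimCoeff_zero_right (i j : ℕ) : feldheimCoeff i j 0 = 1 := by simp [feldheimCoeff]

lemma feldheimCoeff_eq_zero_of_min_lt {i j k : ℕ} (h : min i j < k) :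
    feldheimCoeff i j k = 0 := by
  rcases min_lt_iff.1 h with h | h <;> simp [feldheimCoeff, Nat.choose_eq_zero_of_lt h]

lemma feldheimCoeff_add_two_succ (i j k : ℕ) :
    feldheimCoeff (i + 2) j (k + 1) =
      feldheimCoeff (i + 1) j (k + 1) + 2 * ((i : ℝ) + 1 + j - 2 * k) * feldheimCoeff (i + 1) j k
        - 2 * ((i : ℝ) + 1) * feldheimCoeff i j k := by
  have hj := Nat.cast_choose_succ_mul (R := ℝ) j k
  have hi := Nat.cast_succ_mul_choose (R := ℝ) i k
  simp only [feldheimCoeff, Nat.choose_succ_succ' (i + 1) k, pow_succ, Nat.factorial_succ]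
  push_cast
  linear_combination
    (2 ^ k * k ! * 2 * (i + 1).choose k) * hj + (2 ^ k * k ! * 2 * j.choose k) * hi

noncomputable def feldheimSum (i j : ℕ) (x : ℝ) : ℝ :=
  ∑ k ∈ range (min i j + 1), feldheimCoeff i j k * hermiteH (i + j - 2 * k) x

lemma feldheimSum_eq_sum_range (i j : ℕ) {N : ℕ} (hN : min i j < N) (x : ℝ) :
    feldheimSum i j x = ∑ k ∈ range N, feldheimCoeff i j k * hermiteH (i + j - 2 * k) x :=
  sum_subset (range_subset_range.2 hN) fun k _ hk => by
    rw [feldheimCoeff_eq_zero_of_min_lt (by simp at hk; omega), zero_mul]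

lemma feldheimCoeff_mul_two_mul_hermiteH (i j k : ℕ) (x : ℝ) :
    feldheimCoeff (i + 1) j k * (2 * x * hermiteH (i + 1 + j - 2 * k) x) =
      feldheimCoeff (i + 1) j k * hermiteH (i + 2 + j - 2 * k) x
        + 2 * ((i : ℝ) + 1 + j - 2 * k) * feldheimCoeff (i + 1) j k
          * hermiteH (i + j - 2 * k) x := by
  rcases le_or_gt (2 * k) (i + 1 + j) with h | h
  · rw [two_mul_mul_hermiteH, show i + 1 + j - 2 * k + 1 = i + 2 + j - 2 * k by omega,
      show i + 1 + j - 2 * k - 1 = i + j - 2 * k by omega, Nat.cast_sub h]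
    push_cast
    ring
  · simp [feldheimCoeff_eq_zero_of_min_lt (show min (i + 1) j < k by omega)]

lemma feldheimSum_add_two (i j : ℕ) (x : ℝ) :
    feldheimSum (i + 2) j x =
      2 * x * feldheimSum (i + 1) j x - 2 * (i + 1) * feldheimSum i j x := by
  rw [feldheimSum_eq_sum_range (i + 2) j (N := i + 3) (by omega),
    feldheimSum_eq_sum_range (i + 1) j (N := i + 3) (by omega),
    feldheimSum_eq_sum_range i j (N := i + 2) (by omega), mul_sum]
  have shift : ∀ f : ℕ → ℝ, f 0 = 1 →
      ∑ k ∈ range (i + 3), f k * hermiteH (i + 2 + j - 2 * k) x =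
        hermiteH (i + 2 + j) x + ∑ k ∈ range (i + 2), f (k + 1) * hermiteH (i + j - 2 * k) x :=
    fun f hf => by
      rw [sum_range_succ', hf, one_mul, add_comm]
      simp only [Nat.mul_zero, Nat.sub_zero,
        show ∀ k, i + 2 + j - 2 * (k + 1) = i + j - 2 * k by omega]
  simp_rw [mul_left_comm (2 * x), feldheimCoeff_mul_two_mul_hermiteH]
  rw [sum_add_distrib, shift _ (feldheimCoeff_zero_right _ _),
    shift _ (feldheimCoeff_zero_right _ _), sum_range_succ _ (i + 2),
    feldheimCoeff_eq_zero_of_min_lt (by omega : min (i + 1) j < i + 2), mul_zero,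
    zero_mul, add_zero, mul_sum, add_assoc (hermiteH _ x), add_sub_assoc,
    ← sum_add_distrib, ← sum_sub_distrib]
  refine congrArg _ (sum_congr rfl fun k _ => ?_)
  rw [feldheimCoeff_add_two_succ]
  ring

lemma hermiteH_mul_eq_feldheimSum (i j : ℕ) (x : ℝ) :
    hermiteH i x * hermiteH j x = feldheimSum i j x := by
  induction i using Nat.twoStepInduction with
  | zero => simp [feldheimSum, feldheimCoeff_zero_right, hermiteH_zero]
  | one =>
    rw [feldheimSum_eq_sum_range 1 j (N := 2) (by omega), sum_range_succ, sum_range_one,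
      feldheimCoeff_zero_right, hermiteH_one, two_mul_mul_hermiteH,
      show 1 + j - 2 * 0 = j + 1 by omega, show 1 + j - 2 * 1 = j - 1 by omega]
    simp only [feldheimCoeff, Nat.choose_self, Nat.choose_one_right, pow_one, Nat.factorial_one,
      Nat.cast_one]
    ring
  | more i ih₀ ih₁ =>
    rw [hermiteH_add_two, feldheimSum_add_two, ← ih₀, ← ih₁]
    ring

/-- Feldheim linearization formula for Hermite polynomials:
`H_i(x) H_j(x) = ∑_{k=0}^{min(i,j)} (i choose k)(j choose k) 2^k k! H_{i+j-2k}(x)`. -/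
theorem hermite_feldheim (i j : ℕ) (x : ℝ) :
    hermiteH i x * hermiteH j x =
      ∑ k ∈ Finset.range (min i j + 1),
        (i.choose k : ℝ) * (j.choose k : ℝ) * 2 ^ k * (Nat.factorial k : ℝ) *
          hermiteH (i + j - 2 * k) x :=
  hermiteH_mul_eq_feldheimSum i j x
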